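/- arXiv:1712.06155 — 2 statements merged into one kernel-verified Lean document; each statement's English description precedes it below -/
import Mathlib

section
/- Let X be an n-poised set and let ℓ be an n-node line of X. Suppose there exist two maximal lines M′, M″ of X whose intersection point is a node of X lying on ℓ. Then for every maximal line M of X with M ≠ M′ and M ≠ M″, the number of nodes of M that use ℓ equals n − 2, i.e., |M ∩ X_ℓ| = n − 2. -/
open MvPolynomial

/-- Points of the plane `ℝ²`. -/
abbrev Pt : Type := Fin 2 → ℝ

/-- Bivariate real polynomials. -/
abbrev BPoly : Type := MvPolynomial (Fin 2) ℝ

/-- `X` is an `n`-poised node set: it has `N = (n+1)(n+2)/2` nodes and every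
interpolation problem with polynomials of total degree at most `n` has a unique solution. -/
def IsPoised (n : ℕ) (X : Set Pt) : Prop :=
  X.ncard = (n + 1) * (n + 2) / 2 ∧
  ∀ c : Pt → ℝ, ∃! p : BPoly, p.totalDegree ≤ n ∧ ∀ A ∈ X, eval A p = c A

/-- `p` is an `n`-fundamental polynomial of the node `A` for the node set `X`. -/
def IsFund (n : ℕ) (X : Set Pt) (A : Pt) (p : BPoly) : Prop :=
  p.totalDegree ≤ n ∧ eval A p = 1 ∧ ∀ B ∈ X, B ≠ A → eval B p = 0

/-- `X` is a `GC_n` set: it is `n`-poised and each node has a fundamental polynomial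
that is a product of `n` polynomials of degree `1`. -/
def IsGC (n : ℕ) (X : Set Pt) : Prop :=
  IsPoised n X ∧
  ∀ A ∈ X, ∃ p : BPoly, IsFund n X A p ∧
    ∃ f : Fin n → BPoly, (∀ i, (f i).totalDegree = 1) ∧ p = ∏ i, f i

/-- A line is the zero set of a polynomial of degree exactly `1`. -/
def IsLine (L : Set Pt) : Prop :=
  ∃ f : BPoly, f.totalDegree = 1 ∧ L = {x : Pt | eval x f = 0}

/-- A `k`-node line of `X`: a line passing through exactly `k` nodes of `X`. -/
def IsNodeLine (k : ℕ) (X : Set Pt) (L : Set Pt) : Prop :=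
  IsLine L ∧ (X ∩ L).ncard = k

/-- A maximal line of an `n`-poised set `X`: an `(n+1)`-node line. -/
def IsMaxLine (n : ℕ) (X : Set Pt) (L : Set Pt) : Prop :=
  IsNodeLine (n + 1) X L

/-- The node `A` uses the line `L`: a degree-1 polynomial whose zero set is `L`
divides the `n`-fundamental polynomial of `A` with respect to `X`. -/
def Uses (n : ℕ) (X : Set Pt) (L : Set Pt) (A : Pt) : Prop :=
  ∃ p f : BPoly, IsFund n X A p ∧ f.totalDegree = 1 ∧ L = {x : Pt | eval x f = 0} ∧ f ∣ p

/-- `X_ℓ`: the set of nodes of `X` that use the line `L`. -/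
def UseSet (n : ℕ) (X : Set Pt) (L : Set Pt) : Set Pt :=
  {A ∈ X | Uses n X L A}

/-!
Let `A` be the node where `ℓ`, `M'` and `M''` meet. A polynomial of degree at most `k` vanishing
at `k + 1` points of a line is divisible by the equation of the line. Peeling off factors in this
way, the fundamental polynomial of a node off `M' ∪ M'' ∪ ℓ` is divisible by `M'` (its `n + 1`
nodes), then by `M''` (its `n` nodes other than `A`), then by `ℓ` (its `n - 1` nodes other than
`A`), so the node uses `ℓ`. A node of `M'` off `ℓ` using `ℓ` would in the same way be divisible by
`ℓ`, `M''` and finally `M'`, hence vanish at the node itself. Thus `X_ℓ = X \ (M' ∪ M'' ∪ ℓ)`.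

A maximal line `M ≠ M', M''` meets each of `M'`, `M''`, `ℓ` in at most one node, which gives
`|M ∩ X_ℓ| ≥ n - 2`. Conversely, for `C ∈ M ∩ X_ℓ` the fundamental polynomial of `C` is
`ℓ M' M'' q` with `deg q ≤ n - 3`, and `q` vanishes at the other nodes of `M ∩ X_ℓ`; if there
were more than `n - 3` of them, `M` would divide `q` and the polynomial would vanish at `C`.
-/

theorem eq_C_add_C_mul_X_add_C_mul_X {f : BPoly} (hf : f.totalDegree ≤ 1) :
    f = C (coeff 0 f) + C (coeff (Finsupp.single 0 1) f) * X 0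
      + C (coeff (Finsupp.single 1 1) f) * X 1 := by
  ext m
  obtain ⟨i, j, rfl⟩ : ∃ i j, m = Finsupp.single 0 i + Finsupp.single 1 j :=
    ⟨m 0, m 1, by ext k; fin_cases k <;> simp⟩
  simp only [coeff_add, coeff_C, coeff_C_mul, coeff_X, Finsupp.ext_iff, Fin.forall_fin_two,
    Finsupp.add_apply, Finsupp.single_apply, Finsupp.coe_zero, Pi.zero_apply]
  by_cases hij : i + j ≤ 1
  · obtain ⟨rfl, rfl⟩ | ⟨rfl, rfl⟩ | ⟨rfl, rfl⟩ :
        (i = 0 ∧ j = 0) ∨ (i = 1 ∧ j = 0) ∨ (i = 0 ∧ j = 1) := by omega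
    all_goals simp
  · rw [coeff_eq_zero_of_totalDegree_lt (by
      rw [← Finsupp.degree_apply, map_add, Finsupp.degree_single, Finsupp.degree_single]; omega)]
    grind

theorem exists_eq_linear_of_totalDegree_eq_one {f : BPoly} (hf : f.totalDegree = 1) :
    ∃ a b c : ℝ, (a ≠ 0 ∨ b ≠ 0) ∧ f = C c + C a * X 0 + C b * X 1 := by
  refine ⟨_, _, _, ?_, eq_C_add_C_mul_X_add_C_mul_X hf.le⟩
  by_contra! h
  rw [eq_C_add_C_mul_X_add_C_mul_X hf.le, h.1, h.2] at hf
  simp at hf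

theorem isLine_setOf_eval_eq_zero {f : BPoly} (hf : f.totalDegree = 1) :
    IsLine {x | eval x f = 0} :=
  ⟨f, hf, rfl⟩

theorem IsLine.exists_eq_range {L : Set Pt} (hL : IsLine L) :
    ∃ P v : Pt, v ≠ 0 ∧ L = Set.range fun t : ℝ => P + t • v := by
  obtain ⟨f, hf, rfl⟩ := hL
  obtain ⟨a, b, c, hab, rfl⟩ := exists_eq_linear_of_totalDegree_eq_one hf
  have hs : a ^ 2 + b ^ 2 ≠ 0 := by
    rcases hab with h | h <;> positivity
  -- `P` is the point of the line nearest to the origin and `v` is its direction.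
  refine ⟨![-(c * a) / (a ^ 2 + b ^ 2), -(c * b) / (a ^ 2 + b ^ 2)], ![-b, a], ?_, ?_⟩
  · intro h
    have h0 := congrFun h 0
    have h1 := congrFun h 1
    simp only [Matrix.cons_val_zero, Matrix.cons_val_one, Pi.zero_apply, neg_eq_zero] at h0 h1
    tauto
  · ext x
    simp only [Set.mem_range, map_add, map_mul, eval_C, eval_X, funext_iff, Fin.forall_fin_two,
      Pi.add_apply, Pi.smul_apply, smul_eq_mul, Matrix.cons_val_zero, Matrix.cons_val_one]
    constructor
    · intro (hx : c + a * x 0 + b * x 1 = 0)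
      refine ⟨(a * x 1 - b * x 0) / (a ^ 2 + b ^ 2), ?_, ?_⟩
      · field_simp
        linear_combination (-a) * hx
      · field_simp
        linear_combination (-b) * hx
    · rintro ⟨t, h0, h1⟩
      show c + a * x 0 + b * x 1 = 0
      rw [← h0, ← h1]
      field_simp
      ring

theorem IsLine.eq_range_of_mem {L : Set Pt} (hL : IsLine L) {x y : Pt} (hxy : x ≠ y)
    (hx : x ∈ L) (hy : y ∈ L) : L = Set.range fun s : ℝ => x + s • (y - x) := by
  obtain ⟨P, v, -, rfl⟩ := hL.exists_eq_range
  obtain ⟨t₁, rfl⟩ := hx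
  obtain ⟨t₂, rfl⟩ := hy
  have ht : t₂ - t₁ ≠ 0 := sub_ne_zero.mpr fun h => hxy (by rw [h])
  ext z
  simp only [Set.mem_range]
  constructor
  · rintro ⟨t, rfl⟩
    refine ⟨(t - t₁) / (t₂ - t₁), funext fun i => ?_⟩
    simp only [Pi.add_apply, Pi.smul_apply, Pi.sub_apply, smul_eq_mul]
    field_simp
    ring
  · rintro ⟨s, rfl⟩
    exact ⟨t₁ + s * (t₂ - t₁), by module⟩

theorem IsLine.inter_subsingleton {L L' : Set Pt} (hL : IsLine L) (hL' : IsLine L')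
    (hne : L ≠ L') : (L ∩ L').Subsingleton := fun x hx y hy => by
  by_contra hxy
  exact hne ((hL.eq_range_of_mem hxy hx.1 hy.1).trans (hL'.eq_range_of_mem hxy hx.2 hy.2).symm)

theorem natDegree_aeval_le_totalDegree {σ R : Type*} [CommSemiring R] {g : σ → Polynomial R}
    (hg : ∀ i, (g i).natDegree ≤ 1) (p : MvPolynomial σ R) :
    (aeval g p).natDegree ≤ p.totalDegree := by
  classical
  conv_lhs => rw [p.as_sum, map_sum]
  refine Polynomial.natDegree_sum_le_of_forall_le _ _ fun m hm => ?_
  rw [aeval_monomial, Polynomial.algebraMap_eq]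
  refine (Polynomial.natDegree_C_mul_le _ _).trans <| (Polynomial.natDegree_prod_le _ _).trans ?_
  refine (Finset.sum_le_sum fun i _ => Polynomial.natDegree_pow_le.trans
    (Nat.mul_le_mul_left _ (hg i))).trans ?_
  simp only [mul_one]
  exact le_totalDegree hm

theorem IsLine.eval_eq_zero_of_totalDegree_lt_ncard {L : Set Pt} (hL : IsLine L) {S : Set Pt}
    (hS : S.Finite) (hSL : S ⊆ L) {p : BPoly} (hp : ∀ x ∈ S, eval x p = 0)
    (hdeg : p.totalDegree < S.ncard) : ∀ x ∈ L, eval x p = 0 := by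
  obtain ⟨P, v, hv, rfl⟩ := hL.exists_eq_range
  set γ : ℝ → Pt := fun t => P + t • v
  have hγ : Function.Injective γ := fun s t h => smul_left_injective ℝ hv (add_left_cancel h)
  set r : Polynomial ℝ := aeval (fun i => Polynomial.C (v i) * Polynomial.X + Polynomial.C (P i)) p
  have hr : ∀ t, r.eval t = eval (γ t) p := fun t => by
    rw [← Polynomial.coe_aeval_eq_eval, comp_aeval_apply, MvPolynomial.aeval_eq_eval]
    refine congrArg (fun y => eval y p) (funext fun i => ?_)
    simp only [Polynomial.coe_aeval_eq_eval, Polynomial.eval_add, Polynomial.eval_mul,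
      Polynomial.eval_C, Polynomial.eval_X, Pi.add_apply, Pi.smul_apply, smul_eq_mul, γ]
    ring
  have hT : (γ ⁻¹' S).Finite := hS.preimage hγ.injOn
  have hr0 : r = 0 := by
    refine Polynomial.eq_zero_of_natDegree_lt_card_of_eval_eq_zero' r hT.toFinset
      (fun t ht => (hr t).trans (hp _ (by simpa using ht))) ?_
    rw [← Set.ncard_eq_toFinset_card _ hT, Set.ncard_preimage_of_injective_subset_range hγ hSL]
    exact (natDegree_aeval_le_totalDegree (fun _ => Polynomial.natDegree_linear_le) p).trans_lt hdeg
  rintro _ ⟨t, rfl⟩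
  rw [← hr, hr0, Polynomial.eval_zero]

theorem linear_dvd_of_forall_eval_eq_zero {a b c : ℝ} (ha : a ≠ 0) {p : BPoly}
    (h : ∀ x : Pt, c + a * x 0 + b * x 1 = 0 → eval x p = 0) :
    C c + C a * X 0 + C b * X 1 ∣ p := by
  -- As a polynomial in `X 0` over `ℝ[X 1]` the linear form is a unit times `X 0 - r`,
  -- and `r` is a root of `p`.
  set e := finSuccEquiv ℝ 1
  set r : MvPolynomial (Fin 1) ℝ := C (-c / a) + C (-b / a) * X 0
  have hr : (C a : MvPolynomial (Fin 1) ℝ) * r = -(C c + C b * X 0) := by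
    simp only [r, mul_add, ← mul_assoc, ← C_mul, mul_div_cancel₀ _ ha, C_neg]
    ring
  have he : e (C c + C a * X 0 + C b * X 1) =
      Polynomial.C (C a) * (Polynomial.X - Polynomial.C r) := by
    have h1 : (1 : Fin 2) = Fin.succ 0 := rfl
    have hC : ∀ t : ℝ, e (C t) = Polynomial.C (C t) := fun t => by simp [e, finSuccEquiv_apply]
    simp only [map_add, map_mul, hC, e, finSuccEquiv_X_zero, h1, finSuccEquiv_X_succ]
    rw [mul_sub, ← Polynomial.C_mul (a := (C a : MvPolynomial (Fin 1) ℝ)), hr, map_neg, map_add,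
      Polynomial.C_mul]
    ring
  have hroot : (e p).IsRoot r := by
    refine MvPolynomial.funext fun y => ?_
    rw [Polynomial.eval, Polynomial.hom_eval₂, RingHom.comp_id, ← Polynomial.eval_map,
      ← eval_eq_eval_mv_eval', map_zero]
    apply h
    have h1 : (1 : Fin 2) = Fin.succ 0 := rfl
    rw [h1, Fin.cons_zero, Fin.cons_succ]
    simp only [r, map_add, map_mul, eval_C, eval_X]
    field_simp
    ring
  have hu : IsUnit (Polynomial.C (C a : MvPolynomial (Fin 1) ℝ)) :=
    ((isUnit_iff_ne_zero.mpr ha).map C).map Polynomial.C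
  rw [← map_dvd_iff e, he, hu.mul_left_dvd]
  exact Polynomial.dvd_iff_isRoot.mpr hroot

theorem dvd_of_forall_eval_eq_zero {f p : BPoly} (hf : f.totalDegree = 1)
    (h : ∀ x, eval x f = 0 → eval x p = 0) : f ∣ p := by
  obtain ⟨a, b, c, hab, rfl⟩ := exists_eq_linear_of_totalDegree_eq_one hf
  simp only [map_add, map_mul, eval_C, eval_X] at h
  rcases eq_or_ne a 0 with rfl | ha
  · set e := renameEquiv ℝ (Equiv.swap (0 : Fin 2) 1)
    have he : e (C c + C 0 * X 0 + C b * X 1) = C c + C b * X 0 + C 0 * X 1 := by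
      simp only [e, renameEquiv_apply, map_add, map_mul, rename_C, rename_X,
        Equiv.swap_apply_left, Equiv.swap_apply_right]
      ring
    rw [← map_dvd_iff e, he]
    refine linear_dvd_of_forall_eval_eq_zero (hab.resolve_left fun h => h rfl) fun x hx => ?_
    simp only [e, renameEquiv_apply, eval_rename]
    exact h _ (by simpa [add_right_comm] using hx)
  · exact linear_dvd_of_forall_eval_eq_zero ha h

theorem dvd_of_eval_eq_zero_of_totalDegree_lt_ncard {f p : BPoly} (hf : f.totalDegree = 1)
    {S : Set Pt} (hS : S.Finite) (hSf : ∀ x ∈ S, eval x f = 0) (hp : ∀ x ∈ S, eval x p = 0)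
    (hdeg : p.totalDegree < S.ncard) : f ∣ p :=
  dvd_of_forall_eval_eq_zero hf fun x hx =>
    (isLine_setOf_eval_eq_zero hf).eval_eq_zero_of_totalDegree_lt_ncard hS hSf hp hdeg x hx

theorem ne_zero_of_totalDegree_eq_one {f : BPoly} (hf : f.totalDegree = 1) : f ≠ 0 := by
  rintro rfl
  simp at hf

theorem totalDegree_mul_of_totalDegree_eq_one {r f : BPoly} (hr : r ≠ 0)
    (hf : f.totalDegree = 1) : (r * f).totalDegree = r.totalDegree + 1 := by
  rw [totalDegree_mul_of_isDomain hr (ne_zero_of_totalDegree_eq_one hf), hf]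

theorem IsNodeLine.ne_of_isMaxLine {n : ℕ} {X ℓ M : Set Pt} (hℓ : IsNodeLine n X ℓ)
    (hM : IsMaxLine n X M) : ℓ ≠ M := by
  rintro rfl
  have := hM.2
  rw [hℓ.2] at this
  omega

theorem IsPoised.finite {n : ℕ} {X : Set Pt} (hX : IsPoised n X) : X.Finite :=
  Set.finite_of_ncard_pos (by rw [hX.1]; exact Nat.div_pos (by nlinarith) two_pos)

theorem IsPoised.exists_isFund {n : ℕ} {X : Set Pt} (hX : IsPoised n X) {A : Pt} (hA : A ∈ X) :
    ∃ p, IsFund n X A p := by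
  obtain ⟨p, ⟨hdeg, hval⟩, -⟩ := hX.2 fun B => if B = A then 1 else 0
  exact ⟨p, hdeg, by simpa using hval A hA, fun B hB hBA => by simpa [hBA] using hval B hB⟩

section Fundamental

variable {n : ℕ} {X : Set Pt} {C : Pt} {p : BPoly}

theorem IsFund.ne_zero (hp : IsFund n X C p) : p ≠ 0 := by
  rintro rfl
  simpa using hp.2.1

theorem IsFund.not_dvd (hp : IsFund n X C p) {q : BPoly} (hq : eval C q = 0) : ¬ q ∣ p := by
  rintro ⟨r, rfl⟩
  simpa [hq] using hp.2.1

theorem IsFund.mul_dvd (hX : X.Finite) (hp : IsFund n X C p) {r f : BPoly} (hr : r ∣ p)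
    (hf : f.totalDegree = 1) {S : Set Pt} (hSX : S ⊆ X) (hCS : C ∉ S)
    (hSf : ∀ x ∈ S, eval x f = 0) (hrS : ∀ x ∈ S, eval x r ≠ 0)
    (hdeg : n < S.ncard + r.totalDegree) : r * f ∣ p := by
  obtain ⟨q, rfl⟩ := hr
  refine mul_dvd_mul_left r (dvd_of_eval_eq_zero_of_totalDegree_lt_ncard hf (hX.subset hSX) hSf
    (fun x hx => ?_) ?_)
  · have hpx := hp.2.2 x (hSX hx) (fun h => hCS (h ▸ hx))
    rw [map_mul] at hpx
    exact (mul_eq_zero.mp hpx).resolve_left (hrS x hx)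
  · have := hp.1
    rw [totalDegree_mul_of_isDomain (left_ne_zero_of_mul hp.ne_zero)
      (right_ne_zero_of_mul hp.ne_zero)] at this
    omega

theorem IsFund.ncard_add_totalDegree_le (hX : X.Finite) (hp : IsFund n X C p) {r f : BPoly}
    (hr : r ∣ p) (hf : f.totalDegree = 1) (hCf : eval C f = 0) {S : Set Pt} (hSX : S ⊆ X)
    (hCS : C ∉ S) (hSf : ∀ x ∈ S, eval x f = 0) (hrS : ∀ x ∈ S, eval x r ≠ 0) :
    S.ncard + r.totalDegree ≤ n := by
  by_contra! h
  exact hp.not_dvd (q := r * f) (by rw [map_mul, hCf, mul_zero])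
    (hp.mul_dvd hX hr hf hSX hCS hSf hrS h)

theorem IsFund.dvd_of_isMaxLine (hX : X.Finite) (hp : IsFund n X C p) {f : BPoly}
    (hf : f.totalDegree = 1) (hM : IsMaxLine n X {x | eval x f = 0}) (hC : eval C f ≠ 0) :
    f ∣ p := by
  simpa using hp.mul_dvd hX (one_dvd p) hf (S := X ∩ {x | eval x f = 0}) Set.inter_subset_left
    (fun h => hC h.2) (fun x hx => hx.2) (by simp) (by rw [hM.2]; simp)

theorem IsFund.mul_dvd_of_isMaxLine (hX : X.Finite) (hp : IsFund n X C p) {f₁ f₂ : BPoly}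
    (hf₁ : f₁.totalDegree = 1) (hf₂ : f₂.totalDegree = 1)
    (hM : IsMaxLine n X {x | eval x f₂ = 0})
    (hne : {x | eval x f₁ = 0} ≠ {x | eval x f₂ = 0}) {A : Pt} (hA : A ∈ X)
    (hA₁ : eval A f₁ = 0) (hA₂ : eval A f₂ = 0) (hC : eval C f₂ ≠ 0) (h₁ : f₁ ∣ p) :
    f₁ * f₂ ∣ p := by
  refine hp.mul_dvd hX h₁ hf₂ (S := (X ∩ {x | eval x f₂ = 0}) \ {A}) (fun x hx => hx.1.1)
    (fun h => hC h.1.2) (fun x hx => hx.1.2) (fun x hx h => hx.2 ?_) ?_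
  · exact (isLine_setOf_eval_eq_zero hf₁).inter_subsingleton (isLine_setOf_eval_eq_zero hf₂) hne
      ⟨h, hx.1.2⟩ ⟨hA₁, hA₂⟩
  · rw [Set.ncard_sdiff_singleton_of_mem (show A ∈ X ∩ {x | eval x f₂ = 0} from ⟨hA, hA₂⟩),
      hM.2, hf₁]
    omega

theorem IsFund.not_mul_dvd_of_isMaxLine (hX : X.Finite) (hp : IsFund n X C p)
    {f₁ f₂ f : BPoly} (hf₁ : f₁.totalDegree = 1) (hf₂ : f₂.totalDegree = 1)
    (hf : f.totalDegree = 1) (hM : IsMaxLine n X {x | eval x f = 0})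
    (hne₁ : {x | eval x f₁ = 0} ≠ {x | eval x f = 0})
    (hne₂ : {x | eval x f₂ = 0} ≠ {x | eval x f = 0}) {A : Pt} (hA : A ∈ X)
    (hA₁ : eval A f₁ = 0) (hA₂ : eval A f₂ = 0) (hAf : eval A f = 0) (hCX : C ∈ X)
    (hCf : eval C f = 0) (hCA : C ≠ A) : ¬ f₁ * f₂ ∣ p := by
  intro h
  have hsub : {A, C} ⊆ X ∩ {x | eval x f = 0} := by
    rintro x (rfl | rfl)
    exacts [⟨hA, hAf⟩, ⟨hCX, hCf⟩]
  have hcard := Set.ncard_le_ncard hsub (hX.inter_of_left _)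
  rw [Set.ncard_pair hCA.symm, hM.2] at hcard
  refine hp.not_dvd (q := f₁ * f₂ * f) (by simp [hCf]) (hp.mul_dvd hX h hf
    (S := (X ∩ {x | eval x f = 0}) \ {A, C}) (fun x hx => hx.1.1) (fun h => h.2 (by simp))
    (fun x hx => hx.1.2) (fun x hx => ?_) ?_)
  · have hxA : x ≠ A := fun h => hx.2 (by simp [h])
    rw [map_mul]
    refine mul_ne_zero (fun h => hxA ?_) (fun h => hxA ?_)
    · exact (isLine_setOf_eval_eq_zero hf₁).inter_subsingleton (isLine_setOf_eval_eq_zero hf)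
        hne₁ ⟨h, hx.1.2⟩ ⟨hA₁, hAf⟩
    · exact (isLine_setOf_eval_eq_zero hf₂).inter_subsingleton (isLine_setOf_eval_eq_zero hf)
        hne₂ ⟨h, hx.1.2⟩ ⟨hA₂, hAf⟩
  · rw [Set.ncard_sdiff hsub, hM.2, Set.ncard_pair hCA.symm,
      totalDegree_mul_of_totalDegree_eq_one (ne_zero_of_totalDegree_eq_one hf₁) hf₂, hf₁]
    omega

end Fundamental

theorem Uses.notMem {n : ℕ} {X ℓ : Set Pt} {C : Pt} (h : Uses n X ℓ C) : C ∉ ℓ := by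
  obtain ⟨p, g, hp, -, rfl, hgp⟩ := h
  exact fun hC => hp.not_dvd hC hgp

theorem IsLine.ncard_le_ncard_sdiff_add_one {M L : Set Pt} (hM : IsLine M) (hL : IsLine L)
    (hne : M ≠ L) (s : Set Pt) (hs : s.Finite) (hsM : s ⊆ M) : s.ncard ≤ (s \ L).ncard + 1 := by
  rw [← Set.ncard_inter_add_ncard_sdiff_eq_ncard s L hs, add_comm]
  gcongr
  exact (Set.ncard_le_one (hs.inter_of_left L)).mpr fun a ha b hb =>
    hM.inter_subsingleton hL hne ⟨hsM ha.1, ha.2⟩ ⟨hsM hb.1, hb.2⟩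

section Concurrent

variable {n : ℕ} {X ℓ M' M'' : Set Pt} {A : Pt}

theorem IsFund.mul_mul_dvd_of_concurrent {C : Pt} {p : BPoly} (hX : X.Finite)
    (hp : IsFund n X C p) {g f' f'' : BPoly} (hg : g.totalDegree = 1)
    (hf' : f'.totalDegree = 1) (hf'' : f''.totalDegree = 1)
    (hℓ : IsNodeLine n X {x | eval x g = 0}) (hM' : IsMaxLine n X {x | eval x f' = 0})
    (hM'' : IsMaxLine n X {x | eval x f'' = 0})
    (hne : {x | eval x f' = 0} ≠ {x | eval x f'' = 0}) (hA : A ∈ X) (hAℓ : eval A g = 0)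
    (hAM' : eval A f' = 0) (hAM'' : eval A f'' = 0) (hCM' : eval C f' ≠ 0)
    (hCM'' : eval C f'' ≠ 0) (hCℓ : eval C g ≠ 0) : f' * f'' * g ∣ p := by
  have hn : 0 < n := hℓ.2 ▸ (Set.ncard_pos (hX.inter_of_left _)).mpr ⟨A, hA, hAℓ⟩
  refine hp.mul_dvd hX (hp.mul_dvd_of_isMaxLine hX hf' hf'' hM'' hne hA hAM' hAM'' hCM''
    (hp.dvd_of_isMaxLine hX hf' hM' hCM')) hg (S := (X ∩ {x | eval x g = 0}) \ {A})
    (fun x hx => hx.1.1) (fun h => hCℓ h.1.2) (fun x hx => hx.1.2) (fun x hx => ?_) ?_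
  · have hxA : x ≠ A := hx.2
    rw [map_mul]
    refine mul_ne_zero (fun h => hxA ?_) (fun h => hxA ?_)
    · exact (isLine_setOf_eval_eq_zero hg).inter_subsingleton hM'.1 (hℓ.ne_of_isMaxLine hM')
        ⟨hx.1.2, h⟩ ⟨hAℓ, hAM'⟩
    · exact (isLine_setOf_eval_eq_zero hg).inter_subsingleton hM''.1 (hℓ.ne_of_isMaxLine hM'')
        ⟨hx.1.2, h⟩ ⟨hAℓ, hAM''⟩
  · rw [Set.ncard_sdiff_singleton_of_mem (show A ∈ X ∩ {x | eval x g = 0} from ⟨hA, hAℓ⟩), hℓ.2,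
      totalDegree_mul_of_totalDegree_eq_one (ne_zero_of_totalDegree_eq_one hf') hf'', hf']
    omega

theorem IsPoised.not_uses_of_mem_maxLine (hX : IsPoised n X) (hℓ : IsNodeLine n X ℓ)
    (hM' : IsMaxLine n X M') (hM'' : IsMaxLine n X M'') (hne : M' ≠ M'') (hA : A ∈ X)
    (hAℓ : A ∈ ℓ) (hAM' : A ∈ M') (hAM'' : A ∈ M'') {C : Pt} (hC : C ∈ X) (hCM' : C ∈ M')
    (hCℓ : C ∉ ℓ) : ¬ Uses n X ℓ C := by
  have hℓM' := hℓ.ne_of_isMaxLine hM'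
  have hℓM'' := hℓ.ne_of_isMaxLine hM''
  have hCA : C ≠ A := fun h => hCℓ (h ▸ hAℓ)
  have hCM'' : C ∉ M'' := fun h => hCA (hM'.1.inter_subsingleton hM''.1 hne ⟨hCM', h⟩ ⟨hAM', hAM''⟩)
  rintro ⟨p, g, hp, hg, rfl, hgp⟩
  obtain ⟨f', hf', rfl⟩ := hM'.1
  obtain ⟨f'', hf'', rfl⟩ := hM''.1
  exact hp.not_mul_dvd_of_isMaxLine hX.finite hg hf'' hf' hM' hℓM' hne.symm hA hAℓ hAM'' hAM'
    hC hCM' hCA (hp.mul_dvd_of_isMaxLine hX.finite hg hf'' hM'' hℓM'' hA hAℓ hAM'' hCM'' hgp)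

theorem IsPoised.useSet_eq_sdiff (hX : IsPoised n X) (hℓ : IsNodeLine n X ℓ)
    (hM' : IsMaxLine n X M') (hM'' : IsMaxLine n X M'') (hne : M' ≠ M'') (hA : A ∈ X)
    (hAℓ : A ∈ ℓ) (hAM' : A ∈ M') (hAM'' : A ∈ M'') : UseSet n X ℓ = X \ (M' ∪ M'' ∪ ℓ) := by
  ext C
  simp only [UseSet, Set.mem_sdiff, Set.mem_union, not_or]
  refine and_congr_right fun hC => ⟨fun hu => ⟨⟨fun h => ?_, fun h => ?_⟩, hu.notMem⟩, ?_⟩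
  · exact hX.not_uses_of_mem_maxLine hℓ hM' hM'' hne hA hAℓ hAM' hAM'' hC h hu.notMem hu
  · exact hX.not_uses_of_mem_maxLine hℓ hM'' hM' hne.symm hA hAℓ hAM'' hAM' hC h hu.notMem hu
  · rintro ⟨⟨hCM', hCM''⟩, hCℓ⟩
    obtain ⟨g, hg, rfl⟩ := hℓ.1
    obtain ⟨f', hf', rfl⟩ := hM'.1
    obtain ⟨f'', hf'', rfl⟩ := hM''.1
    obtain ⟨p, hp⟩ := hX.exists_isFund hC
    exact ⟨p, g, hp, hg, rfl, dvd_of_mul_left_dvd (hp.mul_mul_dvd_of_concurrent hX.finite hg hf'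
      hf'' hℓ hM' hM'' hne hA hAℓ hAM' hAM'' hCM' hCM'' hCℓ)⟩

theorem IsPoised.ncard_inter_useSet_le (hX : IsPoised n X) (hℓ : IsNodeLine n X ℓ)
    (hM' : IsMaxLine n X M') (hM'' : IsMaxLine n X M'') (hne : M' ≠ M'') (hA : A ∈ X)
    (hAℓ : A ∈ ℓ) (hAM' : A ∈ M') (hAM'' : A ∈ M'') {M : Set Pt} (hM : IsLine M) :
    (M ∩ UseSet n X ℓ).ncard ≤ n - 2 := by
  rw [hX.useSet_eq_sdiff hℓ hM' hM'' hne hA hAℓ hAM' hAM'']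
  set T := M ∩ (X \ (M' ∪ M'' ∪ ℓ))
  by_contra! hlt
  obtain ⟨C, hCM, hC, hCU⟩ := Set.nonempty_of_ncard_ne_zero (s := T) (by omega)
  simp only [Set.mem_union, not_or] at hCU
  obtain ⟨⟨hCM', hCM''⟩, hCℓ⟩ := hCU
  obtain ⟨f, hf, rfl⟩ := hM
  obtain ⟨g, hg, rfl⟩ := hℓ.1
  obtain ⟨f', hf', rfl⟩ := hM'.1
  obtain ⟨f'', hf'', rfl⟩ := hM''.1
  obtain ⟨p, hp⟩ := hX.exists_isFund hC
  have key := hp.ncard_add_totalDegree_le hX.finite (hp.mul_mul_dvd_of_concurrent hX.finite hg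
    hf' hf'' hℓ hM' hM'' hne hA hAℓ hAM' hAM'' hCM' hCM'' hCℓ) hf hCM (S := T \ {C})
    (fun x hx => hx.1.2.1) (fun h => h.2 rfl) (fun x hx => hx.1.1) (fun x hx => ?_)
  · have h₁ := ne_zero_of_totalDegree_eq_one hf'
    have h₂ := ne_zero_of_totalDegree_eq_one hf''
    rw [Set.ncard_sdiff_singleton_of_mem (show C ∈ T from ⟨hCM, hC, by simp [hCM', hCM'', hCℓ]⟩),
      totalDegree_mul_of_totalDegree_eq_one (mul_ne_zero h₁ h₂) hg,
      totalDegree_mul_of_totalDegree_eq_one h₁ hf'', hf'] at key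
    omega
  · have hxU := hx.1.2.2
    simp only [Set.mem_union, not_or] at hxU
    simp only [map_mul]
    exact mul_ne_zero (mul_ne_zero hxU.1.1 hxU.1.2) hxU.2

theorem IsPoised.le_ncard_inter_useSet (hX : IsPoised n X) (hℓ : IsNodeLine n X ℓ)
    (hM' : IsMaxLine n X M') (hM'' : IsMaxLine n X M'') (hne : M' ≠ M'') (hA : A ∈ X)
    (hAℓ : A ∈ ℓ) (hAM' : A ∈ M') (hAM'' : A ∈ M'') {M : Set Pt} (hM : IsMaxLine n X M)
    (hMM' : M ≠ M') (hMM'' : M ≠ M'') : n - 2 ≤ (M ∩ UseSet n X ℓ).ncard := by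
  have hT : M ∩ UseSet n X ℓ = (((X ∩ M) \ M') \ M'') \ ℓ := by
    rw [hX.useSet_eq_sdiff hℓ hM' hM'' hne hA hAℓ hAM' hAM'']
    ext x
    simp only [Set.mem_inter_iff, Set.mem_sdiff, Set.mem_union]
    tauto
  have hfin := hX.finite.inter_of_left M
  have h₁ := hM.1.ncard_le_ncard_sdiff_add_one hM'.1 hMM' _ hfin Set.inter_subset_right
  have h₂ := hM.1.ncard_le_ncard_sdiff_add_one hM''.1 hMM'' ((X ∩ M) \ M') hfin.sdiff
    (Set.sdiff_subset.trans Set.inter_subset_right)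
  have h₃ := hM.1.ncard_le_ncard_sdiff_add_one hℓ.1 (hℓ.ne_of_isMaxLine hM).symm
    (((X ∩ M) \ M') \ M'') hfin.sdiff.sdiff
    (Set.sdiff_subset.trans (Set.sdiff_subset.trans Set.inter_subset_right))
  rw [hT]
  have := hM.2
  omega

end Concurrent

/-- Let `X` be an `n`-poised set, `ℓ` an `n`-node line, and `M'`, `M''` two
maximal lines whose intersection point is a node of `X` on `ℓ`. Then every maximal line `M`
with `M ≠ M'` and `M ≠ M''` satisfies `|M ∩ X_ℓ| = n - 2`. -/
theorem maxLine_inter_useSet_card_of_concurrent (n : ℕ) (X ℓ M' M'' : Set Pt)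
    (hX : IsPoised n X) (hℓ : IsNodeLine n X ℓ)
    (hM' : IsMaxLine n X M') (hM'' : IsMaxLine n X M'') (hne : M' ≠ M'')
    (hA : ∃ A : Pt, A ∈ X ∧ A ∈ ℓ ∧ A ∈ M' ∧ A ∈ M'') :
    ∀ M : Set Pt, IsMaxLine n X M → M ≠ M' → M ≠ M'' →
      (M ∩ UseSet n X ℓ).ncard = n - 2 := by
  intro M hM hMM' hMM''
  obtain ⟨A, hAX, hAℓ, hAM', hAM''⟩ := hA
  exact le_antisymm (hX.ncard_inter_useSet_le hℓ hM' hM'' hne hAX hAℓ hAM' hAM'' hM.1)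
    (hX.le_ncard_inter_useSet hℓ hM' hM'' hne hAX hAℓ hAM' hAM'' hM hMM' hMM'')
end

section
/- Let M be a maximal line of a GC_n set X with n ≥ 1. Then X \ M is a GC_{n-1} set. Moreover, for every node A ∈ X \ M there exists a degree-1 polynomial m whose zero set is M such that p*_{A,X} = m · p*_{A, X\M}, where p*_{A,X\M} is the fundamental polynomial of A in the (n−1)-poised set X \ M. -/
/-!
A polynomial of degree `≤ n` vanishing at `n + 1` points of a line vanishes on the whole line
(restrict it to the line) and is therefore divisible by the equation `m` of the line. For the
`n + 1` nodes of the maximal line `M = {m = 0}` this has two consequences: multiplying by `m`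
turns interpolation on `X \ M` in degree `n - 1` into interpolation on `X` in degree `n`, and
every fundamental polynomial of `X` at a node off `M` is `m` times the fundamental polynomial
of `X \ M`. Finally `m` is prime, so it is, up to a constant, one of the `n` linear factors of
`p*_{A,X}`, and the other `n - 1` factors make up `p*_{A,X\M}`.
-/

open MvPolynomial

namespace MvPolynomial

section CommSemiring

variable {R : Type*} [CommSemiring R]

theorem eq_linear_of_totalDegree_le_one {f : MvPolynomial (Fin 2) R}
    (hf : f.totalDegree ≤ 1) :
    f = C (coeff (Finsupp.single 0 1) f) * X 0 + C (coeff (Finsupp.single 1 1) f) * X 1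
      + C (coeff 0 f) := by
  ext d
  simp only [coeff_add, coeff_C_mul, coeff_X, coeff_C]
  have hd : d = Finsupp.single 0 (d 0) + Finsupp.single 1 (d 1) := by
    ext k; fin_cases k <;> simp
  by_cases hdeg : d 0 + d 1 ≤ 1
  · rcases (by omega : (d 0 = 0 ∧ d 1 = 0) ∨ (d 0 = 1 ∧ d 1 = 0) ∨ (d 0 = 0 ∧ d 1 = 1)) with
      ⟨h0, h1⟩ | ⟨h0, h1⟩ | ⟨h0, h1⟩ <;>
    · rw [hd, h0, h1]
      simp [Finsupp.single_eq_single_iff, eq_comm (a := (0 : Fin 2 →₀ ℕ))]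
  · have hlt : f.totalDegree < ∑ i ∈ d.support, d i := by
      rw [← Finsupp.degree_apply, Finsupp.degree_eq_sum, Fin.sum_univ_two]; omega
    have hne : ∀ i : Fin 2, Finsupp.single i 1 ≠ d := by
      rintro i rfl; fin_cases i <;> simp at hdeg
    simp [coeff_eq_zero_of_totalDegree_lt hlt, hne, show (0 : Fin 2 →₀ ℕ) ≠ d by
      rintro rfl; simp at hdeg]

theorem coeff_single_ne_zero_of_totalDegree_eq_one {f : MvPolynomial (Fin 2) R}
    (hf : f.totalDegree = 1) :
    coeff (Finsupp.single 0 1) f ≠ 0 ∨ coeff (Finsupp.single 1 1) f ≠ 0 := by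
  by_contra! h
  have hf_eq := eq_linear_of_totalDegree_le_one hf.le
  rw [h.1, h.2] at hf_eq
  rw [hf_eq] at hf
  simp at hf

theorem natDegree_aeval_le_totalDegree {σ : Type*} {g : σ → Polynomial R}
    (hg : ∀ i, (g i).natDegree ≤ 1) (p : MvPolynomial σ R) :
    (aeval g p).natDegree ≤ p.totalDegree := by
  conv_lhs => rw [p.as_sum, map_sum]
  refine Polynomial.natDegree_sum_le_of_forall_le _ _ fun d hd => ?_
  rw [aeval_monomial, Algebra.algebraMap_eq_smul_one, smul_one_mul]
  refine (Polynomial.natDegree_smul_le _ _).trans ?_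
  refine (Polynomial.natDegree_prod_le _ _).trans ?_
  refine le_trans ?_ (le_totalDegree hd)
  exact Finset.sum_le_sum fun i _ =>
    Polynomial.natDegree_pow_le.trans (by simpa using Nat.mul_le_mul_left (d i) (hg i))

end CommSemiring

section Domain

variable {K : Type*} [CommRing K] [IsDomain K]

theorem eval_add_smul_eq_zero_of_totalDegree_lt_card {σ : Type*} {p : MvPolynomial σ K}
    (P v : σ → K) {T : Finset K} (hT : p.totalDegree < T.card)
    (h : ∀ t ∈ T, eval (P + t • v) p = 0) (t : K) : eval (P + t • v) p = 0 := by
  set Q : Polynomial K :=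
    aeval (fun i => Polynomial.C (P i) + Polynomial.C (v i) * Polynomial.X) p
  have hQ : ∀ t, Q.eval t = eval (P + t • v) p := fun t => by
    have hline : (fun i => Polynomial.aeval t (Polynomial.C (P i) + Polynomial.C (v i) *
        Polynomial.X)) = P + t • v := by
      ext i; simp [smul_eq_mul]; ring
    rw [← Polynomial.coe_aeval_eq_eval, ← AlgHom.comp_apply, comp_aeval, hline]
    rfl
  have hdeg : Q.natDegree ≤ p.totalDegree :=
    natDegree_aeval_le_totalDegree (fun i => by compute_degree!) p
  have hQ0 : Q = 0 := Polynomial.eq_zero_of_natDegree_lt_card_of_eval_eq_zero' Q T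
    (fun t ht => (hQ t).trans (h t ht)) (hdeg.trans_lt hT)
  rw [← hQ, hQ0, Polynomial.eval_zero]

theorem totalDegree_C_mul_of_ne_zero {σ : Type*} {c : K} (hc : c ≠ 0)
    (p : MvPolynomial σ K) : (C c * p).totalDegree = p.totalDegree := by
  rcases eq_or_ne p 0 with rfl | hp
  · simp
  · rw [totalDegree_mul_of_isDomain (C_ne_zero.mpr hc) hp, totalDegree_C, zero_add]

end Domain

section Field

variable {K : Type*} [Field K]

theorem prime_of_totalDegree_eq_one {σ : Type*} {m : MvPolynomial σ K} (hm : m.totalDegree = 1) :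
    Prime m := by
  refine UniqueFactorizationMonoid.irreducible_iff_prime.mp
    (irreducible_of_totalDegree_eq_one hm fun x hx => isUnit_iff_ne_zero.mpr ?_)
  rintro rfl
  have : m = 0 := by ext d; simpa using hx d
  simp [this] at hm

theorem eval_eq_zero_of_totalDegree_lt_card {f p : MvPolynomial (Fin 2) K}
    (hf : f.totalDegree ≤ 1) (ha : coeff (Finsupp.single 0 1) f ≠ 0) {S : Finset (Fin 2 → K)}
    (hS : p.totalDegree < S.card) (hSf : ∀ x ∈ S, eval x f = 0) (hSp : ∀ x ∈ S, eval x p = 0)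
    {x : Fin 2 → K} (hx : eval x f = 0) : eval x p = 0 := by
  classical
  set a := coeff (Finsupp.single 0 1) f
  set b := coeff (Finsupp.single 1 1) f
  set c := coeff 0 f
  have hf_eq : f = C a * X 0 + C b * X 1 + C c := eq_linear_of_totalDegree_le_one hf
  -- As `a ≠ 0`, a point of the line is determined by its second coordinate.
  have hline : ∀ y, eval y f = 0 → ![-(c / a), 0] + y 1 • ![-(b / a), 1] = y := by
    intro y hy
    rw [hf_eq] at hy
    simp only [map_add, map_mul, eval_C, eval_X] at hy
    ext i
    fin_cases i
    · simp only [Fin.zero_eta, Fin.isValue, Pi.add_apply, Matrix.cons_val_zero, Pi.smul_apply,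
        smul_eq_mul]
      field_simp
      linear_combination -hy
    · simp
  have hcard : p.totalDegree < (S.image (· 1)).card := by
    rwa [Finset.card_image_of_injOn fun y hy z hz hyz => by
      rw [← hline y (hSf y hy), ← hline z (hSf z hz), hyz]]
  rw [← hline x hx]
  refine eval_add_smul_eq_zero_of_totalDegree_lt_card _ _ hcard ?_ _
  simp only [Finset.mem_image, forall_exists_index, and_imp, forall_apply_eq_imp_iff₂]
  intro y hy
  rw [hline y (hSf y hy)]
  exact hSp y hy

variable [Infinite K]

theorem dvd_of_forall_eval_eq_zero_of_coeff_ne_zero {f p : MvPolynomial (Fin 2) K}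
    (hf : f.totalDegree ≤ 1) (ha : coeff (Finsupp.single 0 1) f ≠ 0)
    (h : ∀ x, eval x f = 0 → eval x p = 0) : f ∣ p := by
  set a := coeff (Finsupp.single 0 1) f
  set b := coeff (Finsupp.single 1 1) f
  set c := coeff 0 f
  have hf_eq : f = C a * X 0 + C b * X 1 + C c := eq_linear_of_totalDegree_le_one hf
  -- In `K[y][x]`, `f = a (x - g(y))`, and `p` vanishes at `x = g(y)` as `(g(y), y)` is on the
  -- line.
  set g : MvPolynomial (Fin 1) K := C (-(b / a)) * X 0 + C (-(c / a))
  have hFf : finSuccEquiv K 1 f = Polynomial.C (C a) * (Polynomial.X - Polynomial.C g) := by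
    rw [hf_eq]
    have hX1 : (Fin.cases Polynomial.X (fun k => Polynomial.C (X k)) 1 :
        Polynomial (MvPolynomial (Fin 1) K)) = Polynomial.C (X 0) := rfl
    have hCdiv : ∀ r : K, (Polynomial.C (C r) : Polynomial (MvPolynomial (Fin 1) K)) =
        Polynomial.C (C a) * Polynomial.C (C (r / a)) := fun r => by
      rw [← map_mul, ← map_mul, mul_div_cancel₀ _ ha]
    simp only [g, finSuccEquiv_apply, map_add, map_mul, map_neg, coe_eval₂Hom, eval₂_C, eval₂_X,
      RingHom.coe_comp, Function.comp_apply, Fin.cases_zero, hX1]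
    rw [hCdiv b, hCdiv c]
    ring
  have hroot : (finSuccEquiv K 1 p).IsRoot g := by
    refine MvPolynomial.funext fun s => ?_
    rw [eval_polynomial_eval_finSuccEquiv, map_zero]
    apply h
    rw [hf_eq]
    have hs : (Fin.cases (eval s g) s : Fin 2 → K) 1 = s 0 := rfl
    simp only [map_add, map_mul, eval_C, eval_X, hs]
    simp only [g, map_add, map_mul, eval_C, eval_X, Fin.cases_zero]
    field_simp
    ring
  have hunit : IsUnit (Polynomial.C (C a) : Polynomial (MvPolynomial (Fin 1) K)) :=
    (isUnit_iff_ne_zero.mpr ha).map (Polynomial.C.comp C)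
  rw [← map_dvd_iff (finSuccEquiv K 1), hFf, hunit.mul_left_dvd]
  exact Polynomial.dvd_iff_isRoot.mpr hroot

theorem dvd_of_totalDegree_lt_card {f p : MvPolynomial (Fin 2) K} (hf : f.totalDegree = 1)
    {S : Finset (Fin 2 → K)} (hS : p.totalDegree < S.card) (hSf : ∀ x ∈ S, eval x f = 0)
    (hSp : ∀ x ∈ S, eval x p = 0) : f ∣ p := by
  wlog ha : coeff (Finsupp.single 0 1) f ≠ 0 generalizing f p S
  · set σ := Equiv.swap (0 : Fin 2) 1
    have hσσ : ⇑σ ∘ ⇑σ = id := by funext i; fin_cases i <;> rfl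
    have hevalσ : ∀ q : MvPolynomial (Fin 2) K, ∀ x, eval (x ∘ σ) (renameEquiv K σ q) = eval x q :=
      fun q x => by rw [renameEquiv_apply, eval_rename, Function.comp_assoc, hσσ, Function.comp_id]
    have hb := (coeff_single_ne_zero_of_totalDegree_eq_one hf).resolve_left ha
    rw [← map_dvd_iff (renameEquiv K σ)]
    refine this (S := S.map ⟨(· ∘ σ), σ.surjective.injective_comp_right⟩) ?_ ?_ ?_ ?_ ?_
    · rwa [totalDegree_renameEquiv]
    · rwa [totalDegree_renameEquiv, Finset.card_map]
    · simpa only [Finset.forall_mem_map, Function.Embedding.coeFn_mk, hevalσ] using hSf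
    · simpa only [Finset.forall_mem_map, Function.Embedding.coeFn_mk, hevalσ] using hSp
    · have hσ1 : Finsupp.single 0 1 = Finsupp.mapDomain σ (Finsupp.single 1 1) := by simp [σ]
      rwa [renameEquiv_apply, hσ1, coeff_rename_mapDomain _ σ.injective]
  exact dvd_of_forall_eval_eq_zero_of_coeff_ne_zero hf.le ha
    fun x => eval_eq_zero_of_totalDegree_lt_card hf.le ha hS hSf hSp

theorem exists_eq_mul_totalDegree_le_of_lt_ncard
    {f p : MvPolynomial (Fin 2) K} (hf : f.totalDegree = 1) {Y : Set (Fin 2 → K)} {n : ℕ}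
    (hY : n < Y.ncard) (hYf : ∀ x ∈ Y, eval x f = 0) (hp : p.totalDegree ≤ n)
    (hYp : ∀ x ∈ Y, eval x p = 0) : ∃ q, p = f * q ∧ q.totalDegree ≤ n - 1 := by
  have hYfin : Y.Finite := Set.finite_of_ncard_ne_zero (by omega)
  obtain ⟨q, rfl⟩ : f ∣ p := dvd_of_totalDegree_lt_card hf
    (S := hYfin.toFinset) (by rw [← Set.ncard_eq_toFinset_card Y hYfin]; omega)
    (by simpa using hYf) (by simpa using hYp)
  refine ⟨q, rfl, ?_⟩
  rcases eq_or_ne q 0 with rfl | hq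
  · simp
  · rw [totalDegree_mul_of_isDomain (by rintro rfl; simp at hf) hq, hf] at hp
    omega

end Field

end MvPolynomial

def IsLinearProduct {σ K : Type*} [CommSemiring K] (n : ℕ) (p : MvPolynomial σ K) : Prop :=
  ∃ g : Fin n → MvPolynomial σ K, (∀ i, (g i).totalDegree = 1) ∧ p = ∏ i, g i

namespace IsLinearProduct

variable {σ K : Type*} [Field K] {k : ℕ}

theorem exists_eq_C_mul_of_mul {m q : MvPolynomial σ K} (hm : m.totalDegree = 1)
    (h : IsLinearProduct (k + 1) (m * q)) : ∃ c r, IsLinearProduct k r ∧ q = C c * r := by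
  obtain ⟨g, hg, hprod⟩ := h
  have hm0 : m ≠ 0 := by rintro rfl; simp at hm
  obtain ⟨i, -, u, hu⟩ := (prime_of_totalDegree_eq_one hm).exists_mem_finset_dvd
    (hprod ▸ dvd_mul_right m q)
  have hu0 : u.totalDegree = 0 := by
    have hgi := hg i
    rw [hu, totalDegree_mul_of_isDomain hm0 (by rintro rfl; simp at hgi), hm] at hgi
    omega
  refine ⟨coeff 0 u, ∏ j, g (i.succAbove j), ⟨_, fun j => hg _, rfl⟩, mul_left_cancel₀ hm0 ?_⟩
  rw [hprod, Fin.prod_univ_succAbove g i, hu, ← totalDegree_eq_zero_iff_eq_C.mp hu0]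
  ring

theorem C_mul_of_eval_eq_one {r : MvPolynomial σ K} (hr : IsLinearProduct k r) {c : K}
    {A : σ → K} (h : eval A (C c * r) = 1) : IsLinearProduct k (C c * r) := by
  obtain ⟨g, hg, rfl⟩ := hr
  cases k with
  | zero =>
    simp only [Finset.univ_eq_empty, Finset.prod_empty, mul_one, eval_C] at h ⊢
    exact ⟨g, hg, by simp [h]⟩
  | succ k =>
    have hc : c ≠ 0 := by rintro rfl; simp at h
    refine ⟨Fin.cons (C c * g 0) (Fin.tail g), Fin.cases ?_ fun i => hg _, ?_⟩
    · rw [Fin.prod_cons, Fin.prod_univ_succ, mul_assoc]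
      rfl
    · simpa [totalDegree_C_mul_of_ne_zero hc] using hg 0

end IsLinearProduct

theorem IsPoised.eq_zero {n : ℕ} {X : Set Pt} (hX : IsPoised n X) {p : BPoly}
    (hp : p.totalDegree ≤ n) (hpX : ∀ x ∈ X, eval x p = 0) : p = 0 :=
  (hX.2 0).unique ⟨hp, hpX⟩ ⟨by simp, by simp⟩

theorem IsPoised.sdiff_of_isMaxLine {n : ℕ} {X M : Set Pt} (hX : IsPoised (n + 1) X)
    (hM : IsMaxLine (n + 1) X M) : IsPoised n (X \ M) := by
  obtain ⟨⟨f, hf, rfl⟩, hXM⟩ := hM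
  have hf0 : f ≠ 0 := by rintro rfl; simp at hf
  have hXfin : X.Finite := Set.finite_of_ncard_ne_zero <| by
    rw [hX.1]; exact (Nat.div_pos (by nlinarith) two_pos).ne'
  refine ⟨?_, fun c => ?_⟩
  · have hsplit := Set.ncard_inter_add_ncard_sdiff_eq_ncard X {x | eval x f = 0} hXfin
    have hN : (n + 1 + 1) * (n + 1 + 2) = (n + 1) * (n + 2) + 2 * (n + 2) := by ring
    rw [hX.1, hXM, hN, Nat.add_mul_div_left _ _ two_pos] at hsplit
    omega
  -- `c · f` vanishes on the line, so its interpolant is `f` times an interpolant of `c` off it.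
  obtain ⟨p, ⟨hp, hpX⟩, -⟩ := hX.2 fun x => c x * eval x f
  obtain ⟨q, rfl, hq⟩ := exists_eq_mul_totalDegree_le_of_lt_ncard hf (Y := X ∩ {x | eval x f = 0})
    (by rw [hXM]; omega) (fun x hx => hx.2) hp (fun x hx => by rw [hpX x hx.1, hx.2, mul_zero])
  have hfq : ∀ x ∈ X \ {x | eval x f = 0}, eval x q = c x := fun x hx =>
    mul_left_cancel₀ hx.2 (by rw [← eval_mul, hpX x hx.1, mul_comm])
  refine ⟨q, ⟨hq, hfq⟩, fun q' ⟨hq', hq'X⟩ => ?_⟩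
  rw [← sub_eq_zero, ← mul_right_inj' hf0, mul_zero]
  refine hX.eq_zero ((totalDegree_mul _ _).trans ?_) fun x hx => ?_
  · rw [hf]
    have := (totalDegree_sub q' q).trans (max_le hq' hq)
    omega
  · by_cases hxf : eval x f = 0
    · simp [hxf]
    · simp [hq'X x ⟨hx, hxf⟩, hfq x ⟨hx, hxf⟩]

theorem IsFund.exists_eq_mul_of_isMaxLine {n : ℕ} {X M : Set Pt} (hM : IsMaxLine n X M) {A : Pt}
    (hA : A ∈ X \ M) {p : BPoly} (hp : IsFund n X A p) :
    ∃ m q : BPoly, m.totalDegree = 1 ∧ M = {x : Pt | eval x m = 0} ∧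
      IsFund (n - 1) (X \ M) A q ∧ p = m * q := by
  obtain ⟨⟨f, hf, rfl⟩, hXM⟩ := hM
  obtain ⟨hpdeg, hpA, hpX⟩ := hp
  obtain ⟨q, rfl, hq⟩ := exists_eq_mul_totalDegree_le_of_lt_ncard hf (Y := X ∩ {x | eval x f = 0})
    (by rw [hXM]; omega) (fun x hx => hx.2) hpdeg fun x hx => hpX x hx.1 fun h => hA.2 (h ▸ hx.2)
  have hfA : eval A f ≠ 0 := hA.2
  refine ⟨C (eval A f)⁻¹ * f, C (eval A f) * q, ?_, ?_, ⟨?_, ?_, fun B hB hBA => ?_⟩, ?_⟩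
  · rw [totalDegree_C_mul_of_ne_zero (inv_ne_zero hfA), hf]
  · ext x
    simp [hfA]
  · rwa [totalDegree_C_mul_of_ne_zero hfA]
  · rwa [eval_mul, eval_C, ← eval_mul]
  · have := hpX B hB.1 hBA
    rw [eval_mul] at this
    simp [(mul_eq_zero.mp this).resolve_left hB.2]
  · rw [mul_mul_mul_comm, ← C_mul, inv_mul_cancel₀ hfA, C_1, one_mul]

/-- If `M` is a maximal line of a `GC_n` set `X` with `n ≥ 1`, then `X \ M` is
a `GC_{n-1}` set, and for every `A ∈ X \ M` the fundamental polynomial of `A` in `X` factors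
as a degree-1 polynomial with zero set `M` times the fundamental polynomial of `A` in `X \ M`. -/
theorem GC_sdiff_maxLine (n : ℕ) (hn : 1 ≤ n) (X M : Set Pt) (hX : IsGC n X)
    (hM : IsMaxLine n X M) :
    IsGC (n - 1) (X \ M) ∧
    ∀ A ∈ X \ M, ∀ p : BPoly, IsFund n X A p →
      ∃ m q : BPoly, m.totalDegree = 1 ∧ M = {x : Pt | eval x m = 0} ∧
        IsFund (n - 1) (X \ M) A q ∧ p = m * q := by
  obtain ⟨k, rfl⟩ : ∃ k, n = k + 1 := ⟨n - 1, by omega⟩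
  refine ⟨⟨hX.1.sdiff_of_isMaxLine hM, fun A hA => ?_⟩,
    fun A hA p hp => hp.exists_eq_mul_of_isMaxLine hM hA⟩
  obtain ⟨p, hp, hprod⟩ := hX.2 A hA.1
  obtain ⟨m, q, hm, -, hq, rfl⟩ := hp.exists_eq_mul_of_isMaxLine hM hA
  obtain ⟨c, r, hr, rfl⟩ := IsLinearProduct.exists_eq_C_mul_of_mul hm hprod
  exact ⟨_, hq, hr.C_mul_of_eval_eq_one hq.2.1⟩
end
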